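/- The concrete product and coproduct on ℬ satisfy the twisted bialgebra compatibility: for disjoint finite subsets S, S' of ℕ, all basis words w ∈ ℬ_S and w' ∈ ℬ_{S'}, and every decomposition S ∪ S' = U ⊔ V into disjoint subsets, δ_{U,V}(m_{S,S'}(w ⊗ w')) = (m_{U∩S, U∩S'} ⊗ m_{V∩S, V∩S'})((id ⊗ τ ⊗ id)(δ_{U∩S, V∩S}(w) ⊗ δ_{U∩S', V∩S'}(w'))), where τ denotes the flip of the two middle tensor factors. -/

import Mathlib

/-!
Twisted descent algebras and the Solomon-Tits algebra (Patras-Schocker).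

* A *packed sequence* is a finite sequence of pairwise disjoint nonempty
  finite subsets of ℕ.
* `TD k` is the free twisted descent algebra `𝒯`: the free `k`-module with
  basis `1_w`, `w` a packed sequence.
* `convL` is the convolution product `∗`, `compL` the composition product `∘`,
  `deltaL` the coproduct `δ`.
* `TD k` also realizes the free twisted bialgebra `ℬ` (whose basis words
  `α_{S_1}⋯α_{S_k}` are exactly the packed sequences); `Tmap u` realizes the
  convolution `1_{U_1} ∗ ⋯ ∗ 1_{U_l}` of characteristic maps as an
  endomorphism of `ℬ`; `BS k S` is the graded piece `ℬ_S` with concatenation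
  `mulInto` and deconcatenation `deltaInto`.
-/

open scoped TensorProduct

noncomputable section
namespace TwistedDescent

/-- A sequence of finite subsets of `ℕ`. -/
abbrev PSeq : Type := List (Finset ℕ)

/-- A packed sequence: a finite sequence of pairwise disjoint nonempty finite
subsets of `ℕ`. -/
def Packed (w : PSeq) : Prop :=
  w.Pairwise (fun S T => Disjoint S T) ∧ ∀ S ∈ w, S ≠ ∅

instance : DecidablePred Packed := fun w => by unfold Packed; infer_instance

/-- The type of packed sequences. -/
abbrev PackedSeq : Type := {w : PSeq // Packed w}

/-- The free twisted descent algebra `𝒯`: the free `k`-module with basis the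
packed sequences.  (The same module realizes the free twisted bialgebra `ℬ`,
whose basis words are the packed sequences.) -/
abbrev TD (k : Type) [CommRing k] : Type := PackedSeq →₀ k

variable (k : Type) [CommRing k]

/-- The basis element `1_l` of `𝒯` if `l` is packed, and `0` otherwise. -/
def mk (l : PSeq) : TD k := if h : Packed l then Finsupp.single ⟨l, h⟩ 1 else 0

/-- The union `S_1 ∪ ⋯ ∪ S_k` of the members of a sequence of sets. -/
def unionOf (w : PSeq) : Finset ℕ := w.foldr (· ∪ ·) ∅

/-- The convolution product `∗` on `𝒯`, as a bilinear map:
`1_{(S_1,…,S_n)} ∗ 1_{(T_1,…,T_m)} = 1_{(S_1,…,S_n,T_1,…,T_m)}` if all the sets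
are pairwise disjoint, and `0` otherwise. -/
def convL : TD k →ₗ[k] TD k →ₗ[k] TD k :=
  Finsupp.lsum k fun w => LinearMap.toSpanSingleton k _ <|
    Finsupp.lsum k fun v => LinearMap.toSpanSingleton k _ (mk k (w.1 ++ v.1))

/-- The refinement `(S_1∩T_1,…,S_1∩T_k,…,S_n∩T_1,…,S_n∩T_k)` of two sequences,
with all empty intersections deleted. -/
def refines (w v : PSeq) : PSeq :=
  w.flatMap fun S => (v.map fun U => S ∩ U).filter fun U => U ≠ ∅

/-- The composition product on basis elements: `0` if the underlying sets
differ, and the refinement otherwise. -/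
def compB (w v : PSeq) : TD k :=
  if unionOf w = unionOf v then mk k (refines w v) else 0

/-- The composition product `∘` on `𝒯`, as a bilinear map. -/
def compL : TD k →ₗ[k] TD k →ₗ[k] TD k :=
  Finsupp.lsum k fun w => LinearMap.toSpanSingleton k _ <|
    Finsupp.lsum k fun v => LinearMap.toSpanSingleton k _ (compB k w.1 v.1)

instance : Zero (TD k ⊗[k] TD k) :=
  (inferInstance : AddZeroClass (TD k ⊗[k] TD k)).toZero

/-- All ways of splitting each block `S_i` of `w` into an ordered pair
`(T_i, U_i)` with `S_i = T_i ⊔ U_i`. -/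
def splittings (w : PSeq) : List (List (Finset ℕ × Finset ℕ)) :=
  (w.map fun S => S.powerset.toList.map fun U => (U, S \ U)).sections

/-- Delete all empty sets from a sequence. -/
def strip (l : PSeq) : PSeq := l.filter fun S => S ≠ ∅

/-- The coproduct on a basis element:
`δ(1_{(S_1,…,S_k)}) = Σ 1_{(T_1,…,T_k)^} ⊗ 1_{(U_1,…,U_k)^}` summed over all
ways of writing `S_i = T_i ⊔ U_i`, where `^` deletes empty sets. -/
def deltaB (w : PackedSeq) : TD k ⊗[k] TD k :=
  ((splittings w.1).map fun p =>
    (mk k (strip (p.map Prod.fst)) ⊗ₜ[k] mk k (strip (p.map Prod.snd)) :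
      TD k ⊗[k] TD k)).sum

/-- The coproduct `δ : 𝒯 → 𝒯 ⊗ 𝒯`. -/
def deltaL : TD k →ₗ[k] TD k ⊗[k] TD k :=
  Finsupp.lsum k fun w => LinearMap.toSpanSingleton k _ (deltaB k w)

/-- The componentwise convolution `∗₂` on `𝒯 ⊗ 𝒯`:
`(a⊗b) ∗₂ (c⊗d) = (a∗c)⊗(b∗d)`. -/
def conv2 : TD k ⊗[k] TD k →ₗ[k] TD k ⊗[k] TD k →ₗ[k] TD k ⊗[k] TD k :=
  (TensorProduct.homTensorHomMap (RingHom.id k) _ _ _ _).comp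
    (TensorProduct.map (convL k) (convL k))

/-- The componentwise composition `∘₂` on `𝒯 ⊗ 𝒯`:
`(a⊗b) ∘₂ (c⊗d) = (a∘c)⊗(b∘d)`. -/
def comp2 : TD k ⊗[k] TD k →ₗ[k] TD k ⊗[k] TD k →ₗ[k] TD k ⊗[k] TD k :=
  (TensorProduct.homTensorHomMap (RingHom.id k) _ _ _ _).comp
    (TensorProduct.map (compL k) (compL k))

/-- The linear map `μ : 𝒯 ⊗ 𝒯 → 𝒯` induced by the convolution product. -/
def muL : TD k ⊗[k] TD k →ₗ[k] TD k := TensorProduct.lift (convL k)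

/-- The submodule `𝒯_S` of `𝒯` spanned by the basis elements `1_w` with `w` an
ordered partition of `S`. -/
def TS (S : Finset ℕ) : Submodule k (TD k) :=
  Submodule.span k {x | ∃ w : PackedSeq, unionOf w.1 = S ∧ x = Finsupp.single w 1}

/-- The blocks of `w` contained in `U_1`, in their original relative order,
then those contained in `U_2`, and so on. -/
def reorder (u w : PSeq) : PSeq := u.flatMap fun U => w.filter fun S => S ⊆ U

/-- Action of `T_u = 1_{U_1} ∗ ⋯ ∗ 1_{U_l}` on a basis word of `ℬ`: the word is
killed unless it has degree `∪ U_j` and each of its blocks is contained in some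
`U_j`, in which case the blocks are regrouped along `u`. -/
def TmapB (u : PSeq) (w : PackedSeq) : TD k :=
  if unionOf w.1 = unionOf u ∧ ∀ S ∈ w.1, ∃ U ∈ u, S ⊆ U then mk k (reorder u w.1)
  else 0

/-- The endomorphism `T_u = 1_{U_1} ∗ ⋯ ∗ 1_{U_l}` of the free twisted
bialgebra `ℬ`. -/
def Tmap (u : PSeq) : Module.End k (TD k) :=
  Finsupp.lsum k fun w => LinearMap.toSpanSingleton k _ (TmapB k u w)

/-- Ordered partitions of the finite set `S`. -/
def OrdPart (S : Finset ℕ) : Type := {w : PSeq // Packed w ∧ unionOf w = S}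

/-- The graded component `ℬ_S`: the free `k`-module on the ordered partitions
of `S`. -/
abbrev BS (S : Finset ℕ) : Type := OrdPart S →₀ k

/-- Basis element of `ℬ_S`, or `0` if `l` is not an ordered partition of `S`. -/
def mkS (S : Finset ℕ) (l : PSeq) : BS k S :=
  if h : Packed l ∧ unionOf l = S then Finsupp.single ⟨l, h⟩ 1 else 0

instance (S S' : Finset ℕ) : Zero (BS k S ⊗[k] BS k S') :=
  (inferInstance : AddZeroClass (BS k S ⊗[k] BS k S')).toZero

/-- Concatenation `m_{U,V} : ℬ_U ⊗ ℬ_V → ℬ_S` (nonzero only when `U ⊔ V = S`),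
as a bilinear map. -/
def mulInto (U V S : Finset ℕ) : BS k U →ₗ[k] BS k V →ₗ[k] BS k S :=
  Finsupp.lsum k fun w => LinearMap.toSpanSingleton k _ <|
    Finsupp.lsum k fun v => LinearMap.toSpanSingleton k _ (mkS k S (w.1 ++ v.1))

/-- Deconcatenation `δ_{U,V} : ℬ_S → ℬ_U ⊗ ℬ_V` (intended for `S = U ⊔ V`):
a basis word goes to `w_U ⊗ w_V` if each of its blocks is contained in `U` or
in `V`, where `w_U` (resp. `w_V`) is the subsequence of blocks contained in `U`
(resp. `V`), and to `0` otherwise. -/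
def deltaInto (S U V : Finset ℕ) : BS k S →ₗ[k] BS k U ⊗[k] BS k V :=
  Finsupp.lsum k fun w => LinearMap.toSpanSingleton k _ <|
    if ∀ B ∈ w.1, B ⊆ U ∨ B ⊆ V then
      mkS k U (w.1.filter fun B => B ⊆ U) ⊗ₜ[k] mkS k V (w.1.filter fun B => B ⊆ V)
    else 0

/-- Graded endomorphisms of `ℬ`: families `(f_S)_S` of endomorphisms of the
graded components `ℬ_S`. -/
abbrev GEnd : Type := (S : Finset ℕ) → Module.End k (BS k S)

/-- The convolution of graded endomorphisms:
`(f∗g)_S = Σ_{U ⊔ V = S} m_{U,V} ∘ (f_U ⊗ g_V) ∘ δ_{U,V}`. -/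
def gconv (f g : GEnd k) : GEnd k := fun S =>
  ∑ U ∈ S.powerset,
    (TensorProduct.lift (mulInto k U (S \ U) S)).comp
      ((TensorProduct.map (f U) (g (S \ U))).comp (deltaInto k S U (S \ U)))

/-- The characteristic map `1_∅`: the identity on `ℬ_∅` and `0` on `ℬ_S` for
`S ≠ ∅`. -/
def gone : GEnd k := fun S => if S = ∅ then LinearMap.id else 0

/-- `1_C(S)`: the sum of all `1_w`, `w` an ordered partition of `S` of
type `C`. -/
def oneC (C : List ℕ) (S : Finset ℕ) : TD k :=
  ∑ᶠ w : PackedSeq,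
    if unionOf w.1 = S ∧ w.1.map Finset.card = C then Finsupp.single w (1 : k) else 0

/-- The composition obtained by reading a matrix of nonnegative integers row by
row and deleting all zero entries. -/
def matComp {r c : ℕ} (a : Fin r → Fin c → ℕ) : List ℕ :=
  (List.finRange r).flatMap fun i =>
    ((List.finRange c).map fun j => a i j).filter fun m => m ≠ 0

/-- `σ` is a permutation of `[n] = {1,…,n}`: it fixes everything outside
`{1,…,n}` (and hence permutes `{1,…,n}`). -/
def IsPermOn (n : ℕ) (σ : Equiv.Perm ℕ) : Prop := ∀ m ∉ Finset.Icc 1 n, σ m = m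

/-- The sequence `({σ(1)},…,{σ(n)})` of singletons, written `1_σ` in `𝒯`. -/
def permList (n : ℕ) (σ : Equiv.Perm ℕ) : PSeq :=
  (List.range n).map fun i => {σ (i + 1)}

/-- An ordered partition `(S_1,…,S_k)` is increasing if `s < s'` whenever
`s ∈ S_i`, `s' ∈ S_j` and `i < j`. -/
def Increasing (w : PSeq) : Prop := w.Pairwise fun S T => ∀ s ∈ S, ∀ t ∈ T, s < t

/-- `σ` is a shuffle of `(S_1,…,S_k)`: the elements of each `S_i` occur in
increasing order in the sequence `(σ(1),…,σ(n))`. -/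
def IsShuffle (n : ℕ) (w : PSeq) (σ : Equiv.Perm ℕ) : Prop :=
  ∀ S ∈ w, ∀ i j : ℕ, 1 ≤ i → i < j → j ≤ n → σ i ∈ S → σ j ∈ S → σ i < σ j

/-- The descent set `D(τ) = {i | 1 ≤ i ≤ n-1, τ(i) > τ(i+1)}` of a permutation
of `[n]`. -/
def Des (n : ℕ) (τ : Equiv.Perm ℕ) : Set ℕ := {i | 1 ≤ i ∧ i < n ∧ τ (i + 1) < τ i}

/-- The right action of a permutation `σ`:
`1_{(S_1,…,S_k)}·σ = 1_{(σ⁻¹(S_1),…,σ⁻¹(S_k))}`, extended linearly. -/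
def actL (σ : Equiv.Perm ℕ) : TD k →ₗ[k] TD k :=
  Finsupp.lsum k fun w =>
    LinearMap.toSpanSingleton k _ (mk k (w.1.map fun S => S.image ⇑σ⁻¹))

section Aux

variable {k : Type} [CommRing k]

lemma unionOf_cons (S : Finset ℕ) (t : PSeq) : unionOf (S :: t) = S ∪ unionOf t := rfl

lemma mem_unionOf {x : ℕ} {l : PSeq} : x ∈ unionOf l ↔ ∃ B ∈ l, x ∈ B := by
  induction l with
  | nil => simp [unionOf]
  | cons S t ih => simp [unionOf_cons, ih, Finset.mem_union]

lemma subset_unionOf {B : Finset ℕ} {l : PSeq} (h : B ∈ l) : B ⊆ unionOf l :=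
  fun x hx => mem_unionOf.2 ⟨B, h, hx⟩

lemma unionOf_append (a b : PSeq) : unionOf (a ++ b) = unionOf a ∪ unionOf b := by
  ext x
  simp [mem_unionOf, Finset.mem_union, or_and_right, exists_or]

lemma packed_append {a b : PSeq} (ha : Packed a) (hb : Packed b)
    (hd : ∀ A ∈ a, ∀ B ∈ b, Disjoint A B) : Packed (a ++ b) := by
  refine ⟨List.pairwise_append.2 ⟨ha.1, hb.1, hd⟩, ?_⟩
  intro S hS
  rcases List.mem_append.1 hS with h | h
  · exact ha.2 S h
  · exact hb.2 S h

lemma packed_filter {a : PSeq} (ha : Packed a) (p : Finset ℕ → Bool) :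
    Packed (a.filter p) :=
  ⟨ha.1.sublist List.filter_sublist, fun S hS => ha.2 S (List.mem_of_mem_filter hS)⟩

lemma unionOf_filter {l : PSeq} {U V : Finset ℕ} (hUV : Disjoint U V)
    (hcond : ∀ B ∈ l, B ⊆ U ∨ B ⊆ V) :
    unionOf (l.filter fun B => B ⊆ U) = U ∩ unionOf l := by
  ext x
  simp only [mem_unionOf, List.mem_filter, Finset.mem_inter, decide_eq_true_eq]
  constructor
  · rintro ⟨B, ⟨hBl, hBU⟩, hxB⟩
    exact ⟨hBU hxB, ⟨B, hBl, hxB⟩⟩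
  · rintro ⟨hxU, B, hBl, hxB⟩
    refine ⟨B, ⟨hBl, ?_⟩, hxB⟩
    rcases hcond B hBl with h | h
    · exact h
    · exact absurd (hUV.forall_ne_finset hxU (h hxB)) (by simp)

lemma mkS_eq_single {S : Finset ℕ} {l : PSeq} (h : Packed l ∧ unionOf l = S) :
    mkS k S l = Finsupp.single ⟨l, h⟩ 1 := dif_pos h

lemma deltaInto_single (S U V : Finset ℕ) (w : OrdPart S) :
    deltaInto k S U V (Finsupp.single w 1) =
      if ∀ B ∈ w.1, B ⊆ U ∨ B ⊆ V then
        mkS k U (w.1.filter fun B => B ⊆ U) ⊗ₜ[k] mkS k V (w.1.filter fun B => B ⊆ V)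
      else 0 := by
  simp [deltaInto]

lemma mulInto_single (U V S : Finset ℕ) (w : OrdPart U) (v : OrdPart V) :
    mulInto k U V S (Finsupp.single w 1) (Finsupp.single v 1) = mkS k S (w.1 ++ v.1) := by
  simp [mulInto]

end Aux

/-- The twisted bialgebra compatibility of the concrete
product and coproduct of `ℬ`: for disjoint finite `S, S' ⊆ ℕ`, basis words
`w ∈ ℬ_S`, `w' ∈ ℬ_{S'}` and every decomposition `S ∪ S' = U ⊔ V`,
`δ_{U,V}(m_{S,S'}(w ⊗ w'))` equals
`(m_{U∩S,U∩S'} ⊗ m_{V∩S,V∩S'})((id ⊗ τ ⊗ id)(δ_{U∩S,V∩S}(w) ⊗ δ_{U∩S',V∩S'}(w')))`. -/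
theorem bialgebra_compatibility (k : Type) [CommRing k]
    (S S' : Finset ℕ) (hSS' : Disjoint S S')
    (U V : Finset ℕ) (hUV : Disjoint U V) (hcover : U ∪ V = S ∪ S')
    (w : OrdPart S) (w' : OrdPart S') :
    deltaInto k (S ∪ S') U V
      (TensorProduct.lift (mulInto k S S' (S ∪ S'))
        (Finsupp.single w 1 ⊗ₜ[k] Finsupp.single w' 1))
    = TensorProduct.map
        (TensorProduct.lift (mulInto k (U ∩ S) (U ∩ S') U))
        (TensorProduct.lift (mulInto k (V ∩ S) (V ∩ S') V))
        (TensorProduct.tensorTensorTensorComm k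
            (BS k (U ∩ S)) (BS k (V ∩ S)) (BS k (U ∩ S')) (BS k (V ∩ S'))
          (deltaInto k S (U ∩ S) (V ∩ S) (Finsupp.single w 1) ⊗ₜ[k]
           deltaInto k S' (U ∩ S') (V ∩ S') (Finsupp.single w' 1))) := by
  obtain ⟨hwp, hwu⟩ := w.2
  obtain ⟨hw'p, hw'u⟩ := w'.2
  have hblw : ∀ B ∈ w.1, B ⊆ S := fun B hB => hwu ▸ subset_unionOf hB
  have hblw' : ∀ B ∈ w'.1, B ⊆ S' := fun B hB => hw'u ▸ subset_unionOf hB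
  have hcat : Packed (w.1 ++ w'.1) ∧ unionOf (w.1 ++ w'.1) = S ∪ S' := by
    refine ⟨packed_append w.2.1 w'.2.1 ?_, by rw [unionOf_append, hwu, hw'u]⟩
    intro A hA B hB
    exact hSS'.mono (hblw A hA) (hblw' B hB)
  rw [TensorProduct.lift.tmul, mulInto_single, mkS_eq_single hcat]
  erw [deltaInto_single (S ∪ S') U V]
  by_cases hcond : ∀ B ∈ (⟨w.1 ++ w'.1, hcat⟩ : OrdPart (S ∪ S')).1, B ⊆ U ∨ B ⊆ V
  · rw [if_pos hcond]
    have hcw : ∀ B ∈ w.1, B ⊆ U ∩ S ∨ B ⊆ V ∩ S := by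
      intro B hB
      rcases hcond B (List.mem_append_left _ hB) with h | h
      · exact Or.inl (Finset.subset_inter h (hblw B hB))
      · exact Or.inr (Finset.subset_inter h (hblw B hB))
    have hcw' : ∀ B ∈ w'.1, B ⊆ U ∩ S' ∨ B ⊆ V ∩ S' := by
      intro B hB
      rcases hcond B (List.mem_append_right _ hB) with h | h
      · exact Or.inl (Finset.subset_inter h (hblw' B hB))
      · exact Or.inr (Finset.subset_inter h (hblw' B hB))
    have hdU : Disjoint (U ∩ S) (V ∩ S) :=
      hUV.mono Finset.inter_subset_left Finset.inter_subset_left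
    have hdU' : Disjoint (U ∩ S') (V ∩ S') :=
      hUV.mono Finset.inter_subset_left Finset.inter_subset_left
    have hdV : Disjoint (V ∩ S) (U ∩ S) := hdU.symm
    have hdV' : Disjoint (V ∩ S') (U ∩ S') := hdU'.symm
    have hcwV : ∀ B ∈ w.1, B ⊆ V ∩ S ∨ B ⊆ U ∩ S := fun B hB => (hcw B hB).symm
    have hcw'V : ∀ B ∈ w'.1, B ⊆ V ∩ S' ∨ B ⊆ U ∩ S' := fun B hB => (hcw' B hB).symm
    have h1 : Packed (w.1.filter fun B => B ⊆ U ∩ S) ∧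
        unionOf (w.1.filter fun B => B ⊆ U ∩ S) = U ∩ S := by
      refine ⟨packed_filter w.2.1 _, ?_⟩
      rw [unionOf_filter hdU hcw, hwu, Finset.inter_assoc, Finset.inter_self]
    have h2 : Packed (w.1.filter fun B => B ⊆ V ∩ S) ∧
        unionOf (w.1.filter fun B => B ⊆ V ∩ S) = V ∩ S := by
      refine ⟨packed_filter w.2.1 _, ?_⟩
      rw [unionOf_filter hdV hcwV, hwu, Finset.inter_assoc, Finset.inter_self]
    have h1' : Packed (w'.1.filter fun B => B ⊆ U ∩ S') ∧
        unionOf (w'.1.filter fun B => B ⊆ U ∩ S') = U ∩ S' := by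
      refine ⟨packed_filter w'.2.1 _, ?_⟩
      rw [unionOf_filter hdU' hcw', hw'u, Finset.inter_assoc, Finset.inter_self]
    have h2' : Packed (w'.1.filter fun B => B ⊆ V ∩ S') ∧
        unionOf (w'.1.filter fun B => B ⊆ V ∩ S') = V ∩ S' := by
      refine ⟨packed_filter w'.2.1 _, ?_⟩
      rw [unionOf_filter hdV' hcw'V, hw'u, Finset.inter_assoc, Finset.inter_self]
    rw [deltaInto_single, if_pos hcw, deltaInto_single, if_pos hcw',
      mkS_eq_single h1, mkS_eq_single h2, mkS_eq_single h1', mkS_eq_single h2',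
      TensorProduct.tensorTensorTensorComm_tmul, TensorProduct.map_tmul,
      TensorProduct.lift.tmul, TensorProduct.lift.tmul]
    erw [mulInto_single, mulInto_single]
    have e1 : w.1.filter (fun B => B ⊆ U ∩ S) = w.1.filter (fun B => B ⊆ U) :=
      List.filter_congr fun B hB => by
        simp only [decide_eq_decide, Finset.subset_inter_iff]
        exact and_iff_left (hblw B hB)
    have e2 : w.1.filter (fun B => B ⊆ V ∩ S) = w.1.filter (fun B => B ⊆ V) :=
      List.filter_congr fun B hB => by
        simp only [decide_eq_decide, Finset.subset_inter_iff]
        exact and_iff_left (hblw B hB)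
    have e1' : w'.1.filter (fun B => B ⊆ U ∩ S') = w'.1.filter (fun B => B ⊆ U) :=
      List.filter_congr fun B hB => by
        simp only [decide_eq_decide, Finset.subset_inter_iff]
        exact and_iff_left (hblw' B hB)
    have e2' : w'.1.filter (fun B => B ⊆ V ∩ S') = w'.1.filter (fun B => B ⊆ V) :=
      List.filter_congr fun B hB => by
        simp only [decide_eq_decide, Finset.subset_inter_iff]
        exact and_iff_left (hblw' B hB)
    simp only [List.filter_append, e1, e2, e1', e2']
  · rw [if_neg hcond]
    push_neg at hcond
    obtain ⟨B, hB, hBU, hBV⟩ := hcond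
    rcases List.mem_append.1 hB with h | h
    · have hz : deltaInto k S (U ∩ S) (V ∩ S) (Finsupp.single w 1) = 0 := by
        rw [deltaInto_single, if_neg]
        intro hall
        rcases hall B h with hc | hc
        · exact hBU (hc.trans Finset.inter_subset_left)
        · exact hBV (hc.trans Finset.inter_subset_left)
      rw [hz, TensorProduct.zero_tmul, LinearEquiv.map_zero, LinearMap.map_zero]
    · have hz : deltaInto k S' (U ∩ S') (V ∩ S') (Finsupp.single w' 1) = 0 := by
        rw [deltaInto_single, if_neg]
        intro hall
        rcases hall B h with hc | hc
        · exact hBU (hc.trans Finset.inter_subset_left)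
        · exact hBV (hc.trans Finset.inter_subset_left)
      rw [hz, TensorProduct.tmul_zero, LinearEquiv.map_zero, LinearMap.map_zero]

end TwistedDescent
end
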